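/- The Verma quiver M_λ has a unique irreducible quotient L_λ, and this quotient satisfies (L_λ)_∅ ≠ 0. -/

import Mathlib

open Module LinearMap

/-- Abstract combinatorial datum of an arrangement of hyperplanes: the oriented
graph `Γ_A` of strata, with arrows `α → β` corresponding to codimension-one
adjacency of closed strata. -/
structure ArrGraph where
  S : Type
  instFin : Fintype S
  instDecEq : DecidableEq S
  arrow : S → S → Prop
  instDecArrow : DecidableRel arrow
  codim : S → ℕ
  arrow_codim : ∀ {a b : S}, arrow a b → codim b = codim a + 1

attribute [instance] ArrGraph.instFin ArrGraph.instDecEq ArrGraph.instDecArrow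

/-- A quiver of the arrangement: finite-dimensional complex vector spaces `V α`
attached to strata, and linear maps `A α β : V β → V α` vanishing unless `α, β`
are connected by an arrow, subject to `∑ β, A α β ∘ A β γ = 0` for `α ≠ γ`. -/
structure ArrQuiver (G : ArrGraph) where
  V : G.S → Type
  instACG : ∀ a, AddCommGroup (V a)
  instMod : ∀ a, Module ℂ (V a)
  instFD : ∀ a, FiniteDimensional ℂ (V a)
  A : ∀ a b : G.S, V b →ₗ[ℂ] V a
  A_supp : ∀ a b : G.S, ¬ (G.arrow a b ∨ G.arrow b a) → A a b = 0
  rel : ∀ a c : G.S, a ≠ c → ∑ b : G.S, (A a b) ∘ₗ (A b c) = 0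

attribute [instance] ArrQuiver.instACG ArrQuiver.instMod ArrQuiver.instFD

/-- The sign `(-1)^((codim α + codim β - 1)/2)` from the duality of quivers. -/
noncomputable def sgn (G : ArrGraph) (a b : G.S) : ℂ :=
  (-1 : ℂ) ^ ((G.codim a + G.codim b - 1) / 2)

/-- The structure maps of the dual quiver:
`A^t α β = (-1)^((codim α + codim β - 1)/2) (A β α)^*`. -/
noncomputable def dualA (G : ArrGraph) (Q : ArrQuiver G) (a b : G.S) :
    Dual ℂ (Q.V b) →ₗ[ℂ] Dual ℂ (Q.V a) :=
  sgn G a b • (Q.A b a).dualMap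

/-- A complete flag of strata ending at `g`: a chain
`∅ = α_0 → α_1 → ⋯ → α_n = g` in `Γ_A` with `codim α_j = j`, where `e` is the
open stratum. -/
def FlagChain (G : ArrGraph) (e g : G.S) : Type :=
  {ch : Fin (G.codim g + 1) → G.S //
    ch 0 = e ∧ (∀ j : Fin (G.codim g), G.arrow (ch j.castSucc) (ch j.succ)) ∧
      ch (Fin.last (G.codim g)) = g}

instance (G : ArrGraph) (e g : G.S) : Fintype (FlagChain G e g) :=
  Subtype.fintype _

instance (G : ArrGraph) (e g : G.S) : DecidableEq (FlagChain G e g) :=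
  Subtype.instDecidableEq

/-- The vector space freely spanned by complete flags ending at `g`. -/
abbrev FlagSpace (G : ArrGraph) (e g : G.S) : Type := FlagChain G e g →₀ ℂ

/-- The gap-filling relation attached to a flag `F` and a position `0 < k < n`:
the sum of all flags agreeing with `F` away from position `k`. -/
noncomputable def relElem (G : ArrGraph) (e g : G.S) (F : FlagChain G e g)
    (k : ℕ) : FlagSpace G e g :=
  ∑ F' ∈ Finset.univ.filter
      (fun F' : FlagChain G e g => ∀ j : Fin (G.codim g + 1), (j : ℕ) ≠ k → F'.1 j = F.1 j),
    Finsupp.single F' 1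

/-- The submodule of gap-filling relations. -/
noncomputable def RelMod (G : ArrGraph) (e g : G.S) : Submodule ℂ (FlagSpace G e g) :=
  Submodule.span ℂ
    {x | ∃ (F : FlagChain G e g) (k : ℕ), 0 < k ∧ k < G.codim g ∧ x = relElem G e g F k}

/-- The space `(M_λ)_g` of the Verma quiver: flags modulo the gap-filling
relations. -/
abbrev MSpace (G : ArrGraph) (e g : G.S) : Type :=
  FlagSpace G e g ⧸ RelMod G e g

/-- Extension of a flag ending at `a` by a stratum `b` with `α → β`. -/
def extendFlag (G : ArrGraph) (e : G.S) {a b : G.S} (h : G.arrow a b)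
    (F : FlagChain G e a) : FlagChain G e b := by
  have hcb : G.codim b = G.codim a + 1 := G.arrow_codim h
  refine ⟨fun j => if hj : (j : ℕ) < G.codim a + 1 then F.1 ⟨j, hj⟩ else b, ?_, ?_, ?_⟩
  · have h0 : (0 : ℕ) < G.codim a + 1 := by omega
    simpa [h0] using F.2.1
  · intro j
    have hj1 : ((j.castSucc : Fin (G.codim b + 1)) : ℕ) = (j : ℕ) := rfl
    have hj2 : ((j.succ : Fin (G.codim b + 1)) : ℕ) = (j : ℕ) + 1 := rfl
    have hjlt : (j : ℕ) < G.codim b := j.isLt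
    by_cases hc : (j : ℕ) + 1 < G.codim a + 1
    · have hc' : (j : ℕ) < G.codim a + 1 := by omega
      simp only [hj1, hj2, dif_pos hc, dif_pos hc']
      have := F.2.2.1 ⟨(j : ℕ), by omega⟩
      simpa [Fin.castSucc, Fin.succ] using this
    · have hj : (j : ℕ) = G.codim a := by omega
      have hc' : (j : ℕ) < G.codim a + 1 := by omega
      simp only [hj1, hj2, dif_neg hc, dif_pos hc']
      have hlast : (⟨(j : ℕ), hc'⟩ : Fin (G.codim a + 1)) = Fin.last (G.codim a) := by
        ext; simpa using hj
      rw [hlast, F.2.2.2]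
      exact h
  · have hlt : ¬ ((Fin.last (G.codim b) : ℕ) < G.codim a + 1) := by
      simp [Fin.last, hcb]
    exact dif_neg hlt

/-- The flag-extension operator `A_{β,α} : (flags to α) → (flags to β)`. -/
noncomputable def upMap (G : ArrGraph) (e : G.S) {a b : G.S} (h : G.arrow a b) :
    FlagSpace G e a →ₗ[ℂ] FlagSpace G e b :=
  Finsupp.lmapDomain ℂ ℂ (extendFlag G e h)

/-- The value of the co-restriction operator `A_{α,β}` of the Verma quiver on a
flag `F = L_{α_0,…,α_n,β}` ending at `β` (with `α → β`, `n = codim α`):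
`∑_{k=0}^n (-1)^k λ_{α_{n-k},α_{n-k+1}} ∑ L_{α_0,…,α_{n-k},α'_{n-k+1},…,α'_n}`,
the inner sum being over flags ending at `α` which agree with `F` up to position
`n - k` and whose modified entries `α'_j` satisfy `α'_j → α_{j+1}` and
`α'_j ≠ α_j`. -/
noncomputable def downFun (G : ArrGraph) (e : G.S) (lam : G.S → G.S → ℂ)
    {a b : G.S} (h : G.arrow a b) (F : FlagChain G e b) : FlagSpace G e a :=
  ∑ k ∈ Finset.range (G.codim a + 1),
    ((-1 : ℂ) ^ k *
        lam (F.1 ⟨G.codim a - k, by have := G.arrow_codim h; omega⟩)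
            (F.1 ⟨G.codim a - k + 1, by have := G.arrow_codim h; omega⟩)) •
      ∑ F' ∈ Finset.univ.filter (fun F' : FlagChain G e a =>
          (∀ j : Fin (G.codim a + 1), (j : ℕ) ≤ G.codim a - k →
            F'.1 j = F.1 ⟨(j : ℕ), by have := G.arrow_codim h; have := j.isLt; omega⟩) ∧
          (∀ j : Fin (G.codim a + 1), G.codim a - k < (j : ℕ) →
            (G.arrow (F'.1 j)
                (F.1 ⟨(j : ℕ) + 1, by have := G.arrow_codim h; have := j.isLt; omega⟩) ∧
              F'.1 j ≠ F.1 ⟨(j : ℕ), by have := G.arrow_codim h; have := j.isLt; omega⟩))),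
        Finsupp.single F' 1

/-- The co-restriction operator `A_{α,β} : (flags to β) → (flags to α)` of the
Verma quiver, extended linearly. -/
noncomputable def downMap (G : ArrGraph) (e : G.S) (lam : G.S → G.S → ℂ)
    {a b : G.S} (h : G.arrow a b) : FlagSpace G e b →ₗ[ℂ] FlagSpace G e a :=
  Finsupp.linearCombination ℂ (downFun G e lam h)

/-- The full structure map of the Verma quiver on the flag spaces. -/
noncomputable def vermaOp (G : ArrGraph) (e : G.S) (lam : G.S → G.S → ℂ)
    (x y : G.S) : FlagSpace G e y →ₗ[ℂ] FlagSpace G e x :=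
  if h : G.arrow x y then downMap G e lam h
  else if h' : G.arrow y x then upMap G e h' else 0

/-- The structure map of the Verma quiver on the quotient spaces `(M_λ)_γ`
(defined via `Submodule.mapQ`; the structure maps do descend to the quotients). -/
noncomputable def vermaA (G : ArrGraph) (e : G.S) (lam : G.S → G.S → ℂ)
    (x y : G.S) : MSpace G e y →ₗ[ℂ] MSpace G e x :=
  open Classical in
  if h : RelMod G e y ≤ (RelMod G e x).comap (vermaOp G e lam x y) then
    Submodule.mapQ _ _ (vermaOp G e lam x y) h
  else 0

/-- A subquiver of the Verma quiver `M_λ`: a family of subspaces invariant under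
all structure maps. -/
def VermaSub (G : ArrGraph) (e : G.S) (lam : G.S → G.S → ℂ)
    (K : ∀ x : G.S, Submodule ℂ (MSpace G e x)) : Prop :=
  ∀ x y : G.S, ∀ v : MSpace G e y, v ∈ K y → vermaA G e lam x y v ∈ K x

/-- A maximal proper subquiver of `M_λ` — equivalently, the kernel of the
projection onto an irreducible quotient of `M_λ`. -/
def VermaMaxProperSub (G : ArrGraph) (e : G.S) (lam : G.S → G.S → ℂ)
    (K : ∀ x : G.S, Submodule ℂ (MSpace G e x)) : Prop :=
  VermaSub G e lam K ∧ (∃ x : G.S, K x ≠ ⊤) ∧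
    ∀ W : ∀ x : G.S, Submodule ℂ (MSpace G e x),
      VermaSub G e lam W → (∀ x, K x ≤ W x) → (∃ x, W x ≠ ⊤) → W = K

section Aux

open Submodule Finsupp

variable (G : ArrGraph) (e : G.S)

/-- Codimension along a flag chain equals position. -/
lemma flagchain_codim (he : G.codim e = 0) {g : G.S} (F : FlagChain G e g)
    (j : Fin (G.codim g + 1)) : G.codim (F.1 j) = j := by
  suffices H : ∀ m (hm : m < G.codim g + 1), G.codim (F.1 ⟨m, hm⟩) = m by
    have := H j.1 j.isLt
    simpa [Fin.eta] using this
  intro m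
  induction m with
  | zero => intro hm; have h0 : (⟨0, hm⟩ : Fin (G.codim g + 1)) = 0 := rfl
            rw [h0, F.2.1, he]
  | succ i ih =>
      intro hm
      have hi : i < G.codim g + 1 := by omega
      have harr := F.2.2.1 ⟨i, by omega⟩
      have hc := G.arrow_codim harr
      have h1 : (Fin.castSucc (⟨i, by omega⟩ : Fin (G.codim g)) : Fin (G.codim g + 1))
          = ⟨i, hi⟩ := rfl
      have h2 : (Fin.succ (⟨i, by omega⟩ : Fin (G.codim g)) : Fin (G.codim g + 1))
          = ⟨i + 1, hm⟩ := rfl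
      rw [h1, h2] at hc
      rw [hc, ih hi]

lemma not_arrow_rev {a g : G.S} (h : G.arrow a g) : ¬ G.arrow g a := fun h' => by
  have := G.arrow_codim h; have := G.arrow_codim h'; omega

/-- Truncation of a flag by one step. -/
def truncFlag {a g : G.S} (hcg : G.codim g = G.codim a + 1) (F : FlagChain G e g)
    (hFa : F.1 ⟨G.codim a, by omega⟩ = a) : FlagChain G e a := by
  refine ⟨fun j => F.1 ⟨j, by have := j.isLt; omega⟩, ?_, ?_, ?_⟩
  · show F.1 ⟨((0 : Fin (G.codim a + 1)) : ℕ), by omega⟩ = e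
    have h0 : ((⟨((0 : Fin (G.codim a + 1)) : ℕ), by omega⟩ : Fin (G.codim g + 1))) = 0 :=
      Fin.ext (by simp)
    rw [h0]; exact F.2.1
  · intro j
    have harr := F.2.2.1 ⟨j.1, by have := j.isLt; omega⟩
    have h1 : (Fin.castSucc (⟨j.1, by have := j.isLt; omega⟩ : Fin (G.codim g)) :
        Fin (G.codim g + 1)) = ⟨(j.castSucc : Fin (G.codim a + 1)).1, by
          have := j.isLt; omega⟩ := rfl
    have h2 : (Fin.succ (⟨j.1, by have := j.isLt; omega⟩ : Fin (G.codim g)) :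
        Fin (G.codim g + 1)) = ⟨(j.succ : Fin (G.codim a + 1)).1, by
          have := j.isLt; omega⟩ := rfl
    rw [h1, h2] at harr
    exact harr
  · show F.1 ⟨((Fin.last (G.codim a)) : ℕ), by simp [Fin.last]; omega⟩ = a
    have hl : ((⟨((Fin.last (G.codim a)) : ℕ), by simp [Fin.last]; omega⟩ :
        Fin (G.codim g + 1))) = ⟨G.codim a, by omega⟩ := Fin.ext (by simp [Fin.last])
    rw [hl]; exact hFa

lemma extend_trunc {a g : G.S} (h : G.arrow a g) (F : FlagChain G e g)
    (hFa : F.1 ⟨G.codim a, by have := G.arrow_codim h; omega⟩ = a) :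
    extendFlag G e h (truncFlag G e (G.arrow_codim h) F hFa) = F := by
  have hcg := G.arrow_codim h
  apply Subtype.ext
  funext j
  show (if hj : (j : ℕ) < G.codim a + 1 then _ else g) = F.1 j
  by_cases hj : (j : ℕ) < G.codim a + 1
  · rw [dif_pos hj]
    exact congrArg F.1 (Fin.ext rfl)
  · rw [dif_neg hj]
    have hjv : (j : ℕ) = G.codim g := by have := j.isLt; omega
    have : j = Fin.last (G.codim g) := Fin.ext (by simpa [Fin.last] using hjv)
    rw [this, F.2.2.2]

lemma trunc_extend {a g : G.S} (h : G.arrow a g) (F : FlagChain G e a)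
    (hFa : (extendFlag G e h F).1 ⟨G.codim a, by have := G.arrow_codim h; omega⟩ = a) :
    truncFlag G e (G.arrow_codim h) (extendFlag G e h F) hFa = F := by
  apply Subtype.ext
  funext j
  show (extendFlag G e h F).1 ⟨j.1, _⟩ = F.1 j
  show (if hj : ((⟨j.1, by have := j.isLt; have := G.arrow_codim h; omega⟩ :
      Fin (G.codim g + 1)) : ℕ) < G.codim a + 1 then F.1 _ else g) = F.1 j
  rw [dif_pos (by exact j.isLt)]

lemma extendFlag_injective {a g : G.S} (h : G.arrow a g) :
    Function.Injective (extendFlag G e h) := by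
  intro F1 F2 hF
  apply Subtype.ext
  funext j
  have := congrArg (fun F : FlagChain G e g => F.1 ⟨j.1, by
    have := j.isLt; have := G.arrow_codim h; omega⟩) hF
  simpa [extendFlag, j.isLt, Nat.le_of_lt_succ j.isLt] using this

lemma extendFlag_apply {a g : G.S} (h : G.arrow a g) (F : FlagChain G e a)
    (j : Fin (G.codim g + 1)) :
    (extendFlag G e h F).1 j = if hj : (j : ℕ) < G.codim a + 1 then F.1 ⟨j, hj⟩ else g := rfl

lemma truncFlag_apply {a g : G.S} (hcg : G.codim g = G.codim a + 1) (F : FlagChain G e g)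
    (hFa : F.1 ⟨G.codim a, by omega⟩ = a) (j : Fin (G.codim a + 1)) :
    (truncFlag G e hcg F hFa).1 j = F.1 ⟨j, by have := j.isLt; omega⟩ := rfl

lemma upMap_single {a g : G.S} (h : G.arrow a g) (F' : FlagChain G e a) :
    upMap G e h (Finsupp.single F' (1 : ℂ)) = Finsupp.single (extendFlag G e h F') 1 := by
  simp [upMap, Finsupp.mapDomain_single]

lemma upMap_relElem {a g : G.S} (h : G.arrow a g) (F : FlagChain G e a) (k : ℕ)
    (hk : k < G.codim a) :
    upMap G e h (relElem G e a F k) = relElem G e g (extendFlag G e h F) k := by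
  have hcg := G.arrow_codim h
  unfold relElem
  rw [map_sum]
  simp only [upMap_single]
  have himg : (Finset.univ.filter
      (fun F'' : FlagChain G e g => ∀ j : Fin (G.codim g + 1), (j : ℕ) ≠ k →
        F''.1 j = (extendFlag G e h F).1 j)) =
      (Finset.univ.filter
      (fun F' : FlagChain G e a => ∀ j : Fin (G.codim a + 1), (j : ℕ) ≠ k →
        F'.1 j = F.1 j)).image (extendFlag G e h) := by
    ext F''
    simp only [Finset.mem_filter, Finset.mem_univ, true_and, Finset.mem_image]
    constructor
    · intro hF''
      have hFa : F''.1 ⟨G.codim a, by omega⟩ = a := by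
        have h1 := hF'' ⟨G.codim a, by omega⟩ (by simp; omega)
        rw [h1, extendFlag_apply, dif_pos (by simp)]
        have h2 : (⟨(⟨G.codim a, by omega⟩ : Fin (G.codim g + 1)).1, by simp⟩ :
            Fin (G.codim a + 1)) = Fin.last (G.codim a) := Fin.ext (by simp [Fin.last])
        rw [h2, F.2.2.2]
      refine ⟨truncFlag G e hcg F'' hFa, ?_, ?_⟩
      · intro j hj
        rw [truncFlag_apply]
        have h1 := hF'' ⟨j.1, by have := j.isLt; omega⟩ (by simpa using hj)
        rw [h1, extendFlag_apply, dif_pos (by simpa using j.isLt)]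
      · exact extend_trunc G e h F'' hFa
    · rintro ⟨F', hF', rfl⟩
      intro j hj
      rw [extendFlag_apply, extendFlag_apply]
      by_cases hlt : (j : ℕ) < G.codim a + 1
      · rw [dif_pos hlt, dif_pos hlt]
        exact hF' ⟨j.1, hlt⟩ (by simpa using hj)
      · rw [dif_neg hlt, dif_neg hlt]
  rw [himg, Finset.sum_image (fun x _ y _ hxy => extendFlag_injective G e h hxy)]

lemma relmod_le {a g : G.S} (h : G.arrow a g) :
    RelMod G e a ≤ (RelMod G e g).comap (upMap G e h) := by
  rw [RelMod, Submodule.span_le]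
  rintro x ⟨F, k, hk0, hkn, rfl⟩
  simp only [SetLike.mem_coe, Submodule.mem_comap]
  rw [upMap_relElem G e h F k hkn]
  exact Submodule.subset_span
    ⟨extendFlag G e h F, k, hk0, by have := G.arrow_codim h; omega, rfl⟩

lemma vermaOp_up (lam : G.S → G.S → ℂ) {a g : G.S} (h : G.arrow a g) :
    vermaOp G e lam g a = upMap G e h := by
  unfold vermaOp
  rw [dif_neg (not_arrow_rev G h), dif_pos h]

lemma vermaA_mk_up (lam : G.S → G.S → ℂ) {a g : G.S} (h : G.arrow a g)
    (x : FlagSpace G e a) :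
    vermaA G e lam g a (Submodule.Quotient.mk x) =
      Submodule.Quotient.mk (upMap G e h x) := by
  have hcond : RelMod G e a ≤ (RelMod G e g).comap (vermaOp G e lam g a) := by
    rw [vermaOp_up G e lam h]; exact relmod_le G e h
  unfold vermaA
  rw [dif_pos hcond, Submodule.mapQ_apply, vermaOp_up G e lam h]

lemma top_of_singles {g : G.S} (W' : Submodule ℂ (MSpace G e g))
    (hs : ∀ F : FlagChain G e g,
      (Submodule.Quotient.mk (Finsupp.single F (1 : ℂ)) : MSpace G e g) ∈ W') :
    W' = ⊤ := by
  rw [Submodule.eq_top_iff']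
  intro v
  obtain ⟨u, rfl⟩ := Submodule.Quotient.mk_surjective _ v
  induction u using Finsupp.induction_linear with
  | zero => simpa using W'.zero_mem
  | add f g hf hg => rw [Submodule.Quotient.mk_add]; exact W'.add_mem hf hg
  | single c b =>
      have hb : Finsupp.single c b = b • Finsupp.single c (1 : ℂ) := by
        rw [Finsupp.smul_single, smul_eq_mul, mul_one]
      rw [hb, Submodule.Quotient.mk_smul]
      exact W'.smul_mem b (hs c)

lemma flag_codim_zero_eq (he : G.codim e = 0) {g : G.S} (hg : G.codim g = 0)
    (F : FlagChain G e g) : g = e := by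
  have h0 := F.2.1
  have hl := F.2.2.2
  have hlast : Fin.last (G.codim g) = 0 := Fin.ext (by simp [Fin.last, hg])
  calc g = F.1 (Fin.last (G.codim g)) := hl.symm
    _ = F.1 0 := congrArg F.1 hlast
    _ = e := h0

lemma gen_top (he : G.codim e = 0) (lam : G.S → G.S → ℂ)
    (W : ∀ x : G.S, Submodule ℂ (MSpace G e x)) (hW : VermaSub G e lam W)
    (hWe : W e = ⊤) (g : G.S) : W g = ⊤ := by
  suffices H : ∀ n (g : G.S), G.codim g = n → W g = ⊤ from H _ g rfl
  intro n
  induction n with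
  | zero =>
      intro g hg
      apply top_of_singles
      intro F
      have hge := flag_codim_zero_eq G e he hg F
      subst hge
      rw [hWe]; trivial
  | succ n ih =>
      intro g hg
      apply top_of_singles
      intro F
      have hca : G.codim (F.1 ⟨n, by omega⟩) = n := by
        have := flagchain_codim G e he F ⟨n, by omega⟩
        simpa using this
      set a := F.1 ⟨n, by omega⟩ with ha
      have harr : G.arrow a g := by
        have h1 := F.2.2.1 ⟨n, by omega⟩
        have h2 : (Fin.succ (⟨n, by omega⟩ : Fin (G.codim g)) : Fin (G.codim g + 1)) =
            Fin.last (G.codim g) := Fin.ext (by simp [Fin.last, hg])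
        rw [h2, F.2.2.2] at h1
        exact h1
      have hFa : F.1 ⟨G.codim a, by have := G.arrow_codim harr; omega⟩ = a :=
        congrArg F.1 (Fin.ext hca)
      have hWa : W a = ⊤ := ih a hca
      have hmem : (Submodule.Quotient.mk
          (Finsupp.single (truncFlag G e (G.arrow_codim harr) F hFa) (1 : ℂ)) :
            MSpace G e a) ∈ W a := by rw [hWa]; trivial
      have hstep := hW g a _ hmem
      rw [vermaA_mk_up G e lam harr, upMap_single, extend_trunc G e harr F hFa] at hstep
      exact hstep

def eFlag (he : G.codim e = 0) : FlagChain G e e :=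
  ⟨fun _ => e, rfl, fun j => absurd j.isLt (by omega), rfl⟩

lemma flagchain_e_subsingleton (he : G.codim e = 0) : Subsingleton (FlagChain G e e) :=
  ⟨fun F1 F2 => Subtype.ext (funext fun j => by
    have h1 : j = 0 := Fin.ext (by have := j.isLt; omega)
    rw [h1, F1.2.1, F2.2.1])⟩

lemma relMod_e_eq_bot (he : G.codim e = 0) : RelMod G e e = ⊥ := by
  have hset : {x | ∃ (F : FlagChain G e e) (k : ℕ),
      0 < k ∧ k < G.codim e ∧ x = relElem G e e F k} = (∅ : Set (FlagSpace G e e)) := by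
    ext x
    simp only [Set.mem_setOf_eq, Set.mem_empty_iff_false, iff_false, not_exists]
    rintro F k ⟨hk1, hk2, -⟩
    rw [he] at hk2; omega
  rw [RelMod, hset, Submodule.span_empty]

lemma mk_eFlag_ne_zero (he : G.codim e = 0) :
    (Submodule.Quotient.mk (Finsupp.single (eFlag G e he) (1 : ℂ)) : MSpace G e e) ≠ 0 := by
  intro hz
  rw [Submodule.Quotient.mk_eq_zero, relMod_e_eq_bot G e he, Submodule.mem_bot] at hz
  exact one_ne_zero (Finsupp.single_eq_zero.mp hz)

lemma submodule_e_eq_bot (he : G.codim e = 0) (W : Submodule ℂ (MSpace G e e))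
    (hW : W ≠ ⊤) : W = ⊥ := by
  haveI := flagchain_e_subsingleton G e he
  have hcard : Fintype.card (FlagChain G e e) = 1 :=
    Fintype.card_eq_one_iff.mpr ⟨eFlag G e he, fun y => Subsingleton.elim y _⟩
  have h1 : Module.finrank ℂ (FlagSpace G e e) = 1 := by
    rw [Module.finrank_finsupp_self, hcard]
  have h2 : Module.finrank ℂ (MSpace G e e) ≤ 1 := by
    rw [← h1]
    exact Submodule.finrank_quotient_le (RelMod G e e)
  have h3 := Submodule.finrank_lt (K := ℂ) (V := MSpace G e e) hW
  have h4 : Module.finrank ℂ W = 0 := by omega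
  exact (Submodule.finrank_eq_zero (R := ℂ)).mp h4

end Aux

/-- The Verma quiver `M_λ` has a unique irreducible quotient
`L_λ` (i.e. a unique maximal proper subquiver `K`), and this quotient is nonzero
at the open stratum: `(L_λ)_∅ ≠ 0`, i.e. `K_∅ ≠ ⊤`. -/
theorem verma_unique_irreducible_quotient (G : ArrGraph) (e : G.S)
    (he : G.codim e = 0) (lam : G.S → G.S → ℂ) :
    ∃ K : ∀ x : G.S, Submodule ℂ (MSpace G e x),
      VermaMaxProperSub G e lam K ∧ K e ≠ ⊤ ∧
      ∀ K' : ∀ x : G.S, Submodule ℂ (MSpace G e x),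
        VermaMaxProperSub G e lam K' → K' = K := by
  classical
  set K : ∀ x : G.S, Submodule ℂ (MSpace G e x) := fun x =>
    ⨆ W : {W : ∀ x : G.S, Submodule ℂ (MSpace G e x) // VermaSub G e lam W ∧ W e ≠ ⊤},
      W.1 x with hK
  have hKsub : VermaSub G e lam K := by
    intro x y v hv
    have hle : K y ≤ Submodule.comap (vermaA G e lam x y) (K x) := by
      apply iSup_le
      intro W u hu
      exact Submodule.mem_comap.mpr (le_iSup (fun W' :
        {W : ∀ x : G.S, Submodule ℂ (MSpace G e x) // VermaSub G e lam W ∧ W e ≠ ⊤} =>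
          W'.1 x) W (W.2.1 x y u hu))
    exact hle hv
  have hKe : K e = ⊥ := by
    apply le_antisymm _ bot_le
    apply iSup_le
    intro W
    rw [submodule_e_eq_bot G e he (W.1 e) W.2.2]
  have hKeT : K e ≠ ⊤ := by
    rw [hKe]
    haveI : Nontrivial (MSpace G e e) := nontrivial_of_ne _ 0 (mk_eFlag_ne_zero G e he)
    exact bot_ne_top
  have hproper : ∀ W : ∀ x : G.S, Submodule ℂ (MSpace G e x),
      VermaSub G e lam W → (∃ x, W x ≠ ⊤) → W e ≠ ⊤ := by
    intro W hWs hex hWe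
    obtain ⟨x, hx⟩ := hex
    exact hx (gen_top G e he lam W hWs hWe x)
  have hmemFam : ∀ W : ∀ x : G.S, Submodule ℂ (MSpace G e x),
      VermaSub G e lam W → W e ≠ ⊤ → ∀ x, W x ≤ K x := by
    intro W hWs hWe x
    exact le_iSup (fun W' :
      {W : ∀ x : G.S, Submodule ℂ (MSpace G e x) // VermaSub G e lam W ∧ W e ≠ ⊤} =>
        W'.1 x) ⟨W, hWs, hWe⟩
  refine ⟨K, ⟨hKsub, ⟨e, hKeT⟩, ?_⟩, hKeT, ?_⟩
  · intro W hWs hKW hex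
    have hWe := hproper W hWs hex
    funext x
    exact le_antisymm (hmemFam W hWs hWe x) (hKW x)
  · intro K' hK'
    obtain ⟨hK's, hK'ex, hK'max⟩ := hK'
    exact (hK'max K hKsub (hmemFam K' hK's (hproper K' hK's hK'ex)) ⟨e, hKeT⟩).symm
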